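/- Let f be the Fibonacci word and let n ≥ 1 have Zeckendorf representation n = Σ_{i=0}^{k} t_i F_i with t_i ∈ {0,1}, t_k = 1, and no two consecutive t_{i+1} t_i both equal to 1 (where F_0 = 1, F_1 = 2, F_{n+2} = F_{n+1} + F_n). Then f_n = t_0, i.e., the n-th letter of the Fibonacci word equals the last digit of the Zeckendorf representation of n. -/

import Mathlib

/-- The set of occurrences of the finite word `u` in the infinite word `x`. -/
def Occ {A : Type*} (x : ℕ → A) (u : List A) : Set ℕ :=
  {n | u = (List.range u.length).map fun i => x (n + i)}

/-- `u` is a prefix of the infinite word `x`. -/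
def IsPref {A : Type*} (u : List A) (x : ℕ → A) : Prop :=
  u = (List.range u.length).map x

/-- The Fibonacci substitution 0 ↦ 01, 1 ↦ 0. -/
def σfib : ℕ → List ℕ := fun a => if a = 0 then [0, 1] else [0]

/-!
The finite Fibonacci words `X₀ = 0`, `X_{k+1} = σ(X_k)` satisfy `X_{k+2} = X_{k+1} X_k` and
`|X_k| = F_k`, and each of them is a prefix of `f`. Reading `X_{k+2}` at position `F_{k+1} + m`
therefore gives `f (F_{k+1} + m) = f m` for `m < F_k`. In a Zeckendorf sum the part below the
leading term `F_{k+1}` is `< F_k`, so the leading term can be dropped without changing the letter;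
what remains at the end is `f (t₀ F₀) = t₀`.
-/

open Finset

section Prefix

variable {A : Type*} {u v : List A} {x : ℕ → A}

lemma IsPref.getElem (h : IsPref u x) {i : ℕ} (hi : i < u.length) : u[i] = x i := by
  have h' := congrArg (·[i]?) h
  simp only [List.getElem?_map, List.getElem?_range hi, Option.map_some,
    List.getElem?_eq_getElem hi, Option.some.injEq] at h'
  exact h'

lemma IsPref.apply_length_add (huv : IsPref (u ++ v) x) (hv : IsPref v x) {i : ℕ}
    (hi : i < v.length) : x (u.length + i) = x i := by
  rw [← huv.getElem (by simpa using hi), List.getElem_append_right (by omega), ← hv.getElem hi]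
  simp

end Prefix

def fibWord : ℕ → List ℕ
  | 0 => [0]
  | n + 1 => (fibWord n).flatMap σfib

lemma fibWord_add_two (n : ℕ) : fibWord (n + 2) = fibWord (n + 1) ++ fibWord n := by
  induction n with
  | zero => rfl
  | succ n ih =>
    change (fibWord (n + 2)).flatMap σfib =
      (fibWord (n + 1)).flatMap σfib ++ (fibWord n).flatMap σfib
    rw [ih, List.flatMap_append]

lemma length_fibWord {F : ℕ → ℕ} (hF0 : F 0 = 1) (hF1 : F 1 = 2)
    (hF : ∀ n, F (n + 2) = F (n + 1) + F n) (n : ℕ) : (fibWord n).length = F n := by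
  induction n using Nat.twoStepInduction with
  | zero => simp [fibWord, hF0]
  | one => simp [fibWord, σfib, hF1]
  | more n ih0 ih1 => rw [fibWord_add_two, List.length_append, ih1, ih0, hF]

lemma sum_digits_mul_lt {F : ℕ → ℕ} (hF0 : 0 < F 0) (hF01 : F 0 < F 1)
    (hF : ∀ n, F (n + 2) = F (n + 1) + F n) {t : ℕ → ℕ} (ht01 : ∀ i, t i ≤ 1) (k : ℕ)
    (hcons : ∀ i, i + 1 < k → ¬(t i = 1 ∧ t (i + 1) = 1)) :
    ∑ i ∈ range k, t i * F i < F k := by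
  induction k using Nat.twoStepInduction with
  | zero => simpa using hF0
  | one => simpa using ((Nat.mul_le_mul_right (F 0) (ht01 0)).trans_eq (one_mul _)).trans_lt hF01
  | more k ih0 ih1 =>
    rw [sum_range_succ, hF]
    rcases Nat.le_one_iff_eq_zero_or_eq_one.mp (ht01 (k + 1)) with h | h
    · have := ih1 fun i hi => hcons i (by omega)
      rw [h, zero_mul]
      omega
    · have htk : t k = 0 := by
        have := hcons k (by omega)
        have := ht01 k
        omega
      have := ih0 fun i hi => hcons i (by omega)
      rw [sum_range_succ, htk, h]
      omega

section FibonacciWord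

variable {f : ℕ → ℕ} (hf0 : f 0 = 0)
  (hfix : ∀ n : ℕ, IsPref (((List.range n).map f).flatMap σfib) f)
  {F : ℕ → ℕ} (hF0 : F 0 = 1) (hF1 : F 1 = 2) (hF : ∀ n, F (n + 2) = F (n + 1) + F n)
include hf0 hfix

lemma isPref_fibWord (n : ℕ) : IsPref (fibWord n) f := by
  induction n with
  | zero => simp [IsPref, fibWord, hf0]
  | succ n ih =>
    have h := hfix (fibWord n).length
    rwa [← ih] at h

lemma apply_one_eq_one : f 1 = 1 :=
  ((isPref_fibWord hf0 hfix 1).getElem (i := 1) (by decide)).symm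

include hF0 hF1 hF

lemma apply_fib_add {k m : ℕ} (hm : m < F k) : f (F (k + 1) + m) = f m := by
  have h := isPref_fibWord hf0 hfix (k + 2)
  rw [fibWord_add_two] at h
  have hlen := length_fibWord hF0 hF1 hF
  simpa only [hlen] using
    h.apply_length_add (isPref_fibWord hf0 hfix k) (by rwa [hlen])

lemma apply_sum_digits_mul {t : ℕ → ℕ} (ht01 : ∀ i, t i ≤ 1) (k : ℕ)
    (hcons : ∀ i < k, ¬(t i = 1 ∧ t (i + 1) = 1)) :
    f (∑ i ∈ range (k + 1), t i * F i) = t 0 := by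
  induction k with
  | zero =>
    rcases Nat.le_one_iff_eq_zero_or_eq_one.mp (ht01 0) with h | h
    · simp [h, hf0]
    · simp [h, hF0, apply_one_eq_one hf0 hfix]
  | succ k ih =>
    have ih := ih fun i hi => hcons i (by omega)
    rw [sum_range_succ]
    rcases Nat.le_one_iff_eq_zero_or_eq_one.mp (ht01 (k + 1)) with h | h
    · simpa [h] using ih
    · have htk : t k = 0 := by
        have := hcons k (by omega)
        have := ht01 k
        omega
      have hlt : ∑ i ∈ range (k + 1), t i * F i < F k := by
        rw [sum_range_succ, htk, zero_mul, add_zero]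
        exact sum_digits_mul_lt (by omega) (by omega) hF ht01 k fun i hi => hcons i (by omega)
      rw [h, one_mul, add_comm, apply_fib_add hf0 hfix hF0 hF1 hF hlt, ih]

end FibonacciWord

theorem stmt_9_general (f : ℕ → ℕ) (hf0 : f 0 = 0)
    (hfix : ∀ n : ℕ, IsPref (((List.range n).map f).flatMap σfib) f)
    (F : ℕ → ℕ) (hF0 : F 0 = 1) (hF1 : F 1 = 2)
    (hF : ∀ n, F (n + 2) = F (n + 1) + F n)
    (n k : ℕ) (t : ℕ → ℕ) (ht01 : ∀ i, t i ≤ 1)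
    (hcons : ∀ i < k, ¬(t i = 1 ∧ t (i + 1) = 1))
    (hrep : n = ∑ i ∈ Finset.range (k + 1), t i * F i) :
    f n = t 0 :=
  hrep ▸ apply_sum_digits_mul hf0 hfix hF0 hF1 hF ht01 k hcons

theorem stmt_9 (f : ℕ → ℕ) (hf0 : f 0 = 0)
    (hfix : ∀ n : ℕ, IsPref (((List.range n).map f).flatMap σfib) f)
    (F : ℕ → ℕ) (hF0 : F 0 = 1) (hF1 : F 1 = 2)
    (hF : ∀ n, F (n + 2) = F (n + 1) + F n)
    (n k : ℕ) (hn : 1 ≤ n) (t : ℕ → ℕ) (ht01 : ∀ i, t i ≤ 1) (htk : t k = 1)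
    (hcons : ∀ i < k, ¬(t i = 1 ∧ t (i + 1) = 1))
    (hrep : n = ∑ i ∈ Finset.range (k + 1), t i * F i) :
    f n = t 0 :=
  stmt_9_general f hf0 hfix F hF0 hF1 hF n k t ht01 hcons hrep
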